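/- Let n ≥ 2, let M be an n-connected binary matroid with |E(M)| ≥ 2n-2, and let T ⊆ E(M) with |T| = n-1. Then M'_T is n-connected if and only if for every subset A ⊆ E(M) with |A| = n-2, there exists a circuit C of M with C ⊆ E(M) \ A and |C ∩ T| odd. -/

import Mathlib

open Set

variable {α : Type*}

/-- The rank of a set `X` in a matroid `M`: the maximum size of an independent subset of `X`. -/
noncomputable def mrank (M : Matroid α) (X : Set α) : ℕ :=
  sSup {n | ∃ I, M.Indep I ∧ I ⊆ X ∧ I.ncard = n}

/-- `(A, B)` is a `k`-separation of `M`: a partition of the ground set with both sides of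
size at least `k` and `r(A) + r(B) - r(M) ≤ k - 1` (written additively). -/
def IsKSeparation (M : Matroid α) (k : ℕ) (A B : Set α) : Prop :=
  A ∪ B = M.E ∧ Disjoint A B ∧ k ≤ A.ncard ∧ k ≤ B.ncard ∧
    mrank M A + mrank M B + 1 ≤ mrank M M.E + k

/-- `M` is `n`-connected if it has no `k`-separation for any `k < n`. -/
def NConnected (M : Matroid α) (n : ℕ) : Prop :=
  ∀ k A B, 1 ≤ k → k < n → ¬ IsKSeparation M k A B

/-- A circuit is a minimal dependent set. -/
def MCircuit (M : Matroid α) (C : Set α) : Prop := Minimal M.Dep C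

/-- A cocircuit is a circuit of the dual matroid. -/
def MCocircuit (M : Matroid α) (C : Set α) : Prop := MCircuit M✶ C

/-- A loop is a dependent singleton. -/
def MLoop (M : Matroid α) (e : α) : Prop := M.Dep {e}

/-- A coloop is a loop of the dual, i.e. an element lying in every base. -/
def MColoop (M : Matroid α) (e : α) : Prop := M✶.Dep {e}

/-- `M` is the vector matroid of the family of vectors `φ` over `GF(2)`:
a set is independent iff it lies in the ground set and the corresponding
vectors are linearly independent. -/
def IsRep {W : Type*} [AddCommGroup W] [Module (ZMod 2) W] (M : Matroid α) (φ : α → W) : Prop :=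
  ∀ I : Set α, M.Indep I ↔ I ⊆ M.E ∧ LinearIndependent (ZMod 2) (I.restrict φ)

open scoped Classical in
/-- The columns of the element splitting matrix `A'_T`: each original column gets an extra
coordinate (the new row), equal to `1` exactly on the columns labelled by `T`, and a new
column `a` which is `1` in the new row and `0` elsewhere. -/
noncomputable def splitRep {W : Type*} [AddCommGroup W] [Module (ZMod 2) W]
    (φ : α → W) (T : Set α) (a : α) : α → W × ZMod 2 :=
  fun x => if x = a then (0, 1) else (φ x, if x ∈ T then 1 else 0)

/-- `N` is the element splitting matroid `M'_T` of the binary matroid `M` (represented by `φ`)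
with respect to `T`, with new element `a`. -/
def IsEleSplit {W : Type*} [AddCommGroup W] [Module (ZMod 2) W]
    (M : Matroid α) (φ : α → W) (T : Set α) (a : α) (N : Matroid α) : Prop :=
  a ∉ M.E ∧ N.E = insert a M.E ∧ IsRep N (splitRep φ T a)

/-- `M` is the contraction `N / a` of the single element `a` from `N`. -/
def ContractElemEq (N : Matroid α) (a : α) (M : Matroid α) : Prop :=
  M.E = N.E \ {a} ∧ ∀ I : Set α,
    M.Indep I ↔ a ∉ I ∧
      ((N.Indep {a} ∧ N.Indep (insert a I)) ∨ (¬ N.Indep {a} ∧ N.Indep I))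

/-!
Write `ψ = splitRep φ T a` for the columns of `M'_T` and `e = (0, 1) = ψ a`. Forgetting the new
row maps `span (ψ '' X)` onto `span (φ '' X)`, with kernel `⟨e⟩` if `e` lies in the span and
`0` otherwise. Hence `r'(X ∪ a) = r(X) + 1`, while for `X ⊆ E(M)` the rank goes up by one
exactly when `e` is a sum of columns of `X`, i.e. when `X` contains a circuit meeting `T`
oddly: over `GF(2)` a set of columns with vanishing sum splits into circuits, one of which is
odd when the set is.

So if `E(M) \ A` contains no odd circuit, `(A ∪ a, E(M) \ A)` is an `(n-1)`-separation of
`M'_T`. Conversely, removing `a` from its side of a `k`-separation of `M'_T` leaves a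
`k`-separation of `M`, unless that side has only `k` elements; then the other side contains an
odd circuit, which lowers the order to `k - 1`.
-/

open Module Submodule

theorem LinearIndepOn.finrank_span_image {ι K V : Type*} [Field K] [AddCommGroup V] [Module K V]
    {v : ι → V} {s : Set ι} (h : LinearIndepOn K v s) :
    finrank K (span K (v '' s)) = s.ncard := by
  rw [finrank, Set.ncard_def, ← toENat_rank_span_set h]
  simp

theorem ZMod.ne_zero_iff_eq_one {c : ZMod 2} : c ≠ 0 ↔ c = 1 := by
  revert c
  decide

theorem sum_boole_ne_zero_iff_odd (S : Finset α) (T : Set α) [DecidablePred (· ∈ T)] :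
    (∑ x ∈ S, if x ∈ T then (1 : ZMod 2) else 0) ≠ 0 ↔ Odd ((↑S ∩ T).ncard) := by
  rw [ZMod.ne_zero_iff_eq_one, Finset.sum_boole, ZMod.natCast_eq_one_iff_odd, ← ncard_coe_finset,
    Finset.coe_filter]
  rfl

theorem mem_span_image_iff_exists_finset_sum {ι V : Type*} [AddCommGroup V] [Module (ZMod 2) V]
    {v : ι → V} {s : Set ι} {x : V} :
    x ∈ span (ZMod 2) (v '' s) ↔ ∃ S : Finset ι, ↑S ⊆ s ∧ ∑ i ∈ S, v i = x := by
  constructor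
  · rw [Finsupp.mem_span_image_iff_linearCombination]
    rintro ⟨l, hl, rfl⟩
    refine ⟨l.support, hl, ?_⟩
    rw [Finsupp.linearCombination_apply, Finsupp.sum]
    refine Finset.sum_congr rfl fun i hi => ?_
    rw [ZMod.ne_zero_iff_eq_one.1 (Finsupp.mem_support_iff.1 hi), one_smul]
  · rintro ⟨S, hS, rfl⟩
    exact sum_mem fun i hi => subset_span ⟨i, hS hi, rfl⟩

section SplitFirstCoordinate

variable {K W : Type*} [Field K] [AddCommGroup W] [Module K W]
  (V : Submodule K (W × K)) [FiniteDimensional K V]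

theorem Submodule.finrank_map_fst_add_finrank_ker :
    finrank K (V.map (LinearMap.fst K W K)) +
      finrank K (LinearMap.ker ((LinearMap.fst K W K).domRestrict V)) = finrank K V := by
  rw [← LinearMap.range_domRestrict]
  exact LinearMap.finrank_range_add_finrank_ker _

theorem Submodule.finrank_map_fst_add_one (h : ((0, 1) : W × K) ∈ V) :
    finrank K (V.map (LinearMap.fst K W K)) + 1 = finrank K V := by
  have hker : LinearMap.ker ((LinearMap.fst K W K).domRestrict V) = K ∙ ⟨(0, 1), h⟩ := by
    ext ⟨⟨w, c⟩, hv⟩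
    simp only [LinearMap.mem_ker, LinearMap.domRestrict_apply, LinearMap.fst_apply,
      mem_span_singleton, Subtype.ext_iff, SetLike.val_smul, Prod.smul_mk, smul_zero, smul_eq_mul,
      mul_one, Prod.mk.injEq]
    exact ⟨fun hw => ⟨c, hw.symm, rfl⟩, fun ⟨_, hw, _⟩ => hw.symm⟩
  have hne : (⟨(0, 1), h⟩ : V) ≠ 0 := by simp [Subtype.ext_iff]
  rw [← V.finrank_map_fst_add_finrank_ker, hker, finrank_span_singleton hne]

theorem Submodule.finrank_map_fst (h : ((0, 1) : W × K) ∉ V) :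
    finrank K (V.map (LinearMap.fst K W K)) = finrank K V := by
  have hker : LinearMap.ker ((LinearMap.fst K W K).domRestrict V) = ⊥ := by
    refine (LinearMap.ker_eq_bot').2 ?_
    rintro ⟨⟨w, c⟩, hv⟩ (rfl : w = 0)
    obtain rfl | hc := eq_or_ne c 0
    · rfl
    · exact absurd (by simpa [hc] using V.smul_mem c⁻¹ hv) h
  rw [← V.finrank_map_fst_add_finrank_ker, hker, finrank_bot, add_zero]

end SplitFirstCoordinate

section Rank

variable {M : Matroid α} {I X Y : Set α} {m : ℕ}

theorem le_mrank (hI : M.Indep I) (hIX : I ⊆ X) (hX : X.Finite) : I.ncard ≤ mrank M X := by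
  refine le_csSup ⟨X.ncard, ?_⟩ ⟨I, hI, hIX, rfl⟩
  rintro _ ⟨J, -, hJX, rfl⟩
  exact ncard_le_ncard hJX hX

theorem mrank_le_of_forall_indep (h : ∀ I, M.Indep I → I ⊆ X → I.ncard ≤ m) : mrank M X ≤ m :=
  csSup_le ⟨0, ∅, M.empty_indep, empty_subset X, ncard_empty α⟩ <| by
    rintro _ ⟨I, hI, hIX, rfl⟩
    exact h I hI hIX

theorem mrank_le_ncard (hX : X.Finite) : mrank M X ≤ X.ncard :=
  mrank_le_of_forall_indep fun _ _ hIX => ncard_le_ncard hIX hX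

theorem mrank_mono (hXY : X ⊆ Y) (hY : Y.Finite) : mrank M X ≤ mrank M Y :=
  mrank_le_of_forall_indep fun _ hI hIX => le_mrank hI (hIX.trans hXY) hY

end Rank

section Representation

variable {W : Type*} [AddCommGroup W] [Module (ZMod 2) W] {M : Matroid α} {φ : α → W}
  {C I X : Set α}

theorem IsRep.linearIndepOn (hM : IsRep M φ) (hI : M.Indep I) : LinearIndepOn (ZMod 2) φ I :=
  ((hM I).1 hI).2

theorem IsRep.mrank_eq_finrank (hM : IsRep M φ) (hXE : X ⊆ M.E) (hX : X.Finite) :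
    mrank M X = finrank (ZMod 2) (span (ZMod 2) (φ '' X)) := by
  have := FiniteDimensional.span_of_finite (ZMod 2) (hX.image φ)
  obtain ⟨I, hI⟩ := M.exists_isBasis' X
  have hspan : span (ZMod 2) (φ '' X) = span (ZMod 2) (φ '' I) := by
    refine le_antisymm (span_le.2 ?_) (span_mono (image_mono hI.subset))
    rintro _ ⟨x, hxX, rfl⟩
    by_cases hxI : x ∈ I
    · exact subset_span (mem_image_of_mem φ hxI)
    · have hdep : ¬ LinearIndepOn (ZMod 2) φ (insert x I) := fun h =>
          hI.insert_not_indep ⟨hxX, hxI⟩ <|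
          (hM _).2 ⟨insert_subset (hXE hxX) hI.indep.subset_ground, h⟩
      rw [linearIndepOn_insert hxI] at hdep
      by_contra hx
      exact hdep ⟨hM.linearIndepOn hI.indep, hx⟩
  rw [hspan, (hM.linearIndepOn hI.indep).finrank_span_image]
  refine le_antisymm (mrank_le_of_forall_indep fun J hJ hJX => ?_)
    (le_mrank hI.indep hI.subset hX)
  rw [← (hM.linearIndepOn hI.indep).finrank_span_image, ← hspan,
    ← (hM.linearIndepOn hJ).finrank_span_image]
  exact finrank_mono (span_mono (image_mono hJX))

theorem IsRep.not_indep_of_sum_eq_zero (hM : IsRep M φ) {S : Finset α} (hS : S.Nonempty)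
    (h : ∑ x ∈ S, φ x = 0) : ¬ M.Indep ↑S := fun hI => by
  obtain ⟨x, hx⟩ := hS
  exact one_ne_zero <|
    linearIndepOn_finset_iff.1 (hM.linearIndepOn hI) (fun _ => 1) (by simpa using h) x hx

theorem IsRep.exists_finset_sum_eq_zero_of_mcircuit (hM : IsRep M φ) (hC : MCircuit M C) :
    ∃ S : Finset α, ↑S = C ∧ ∑ x ∈ S, φ x = 0 := by
  classical
  have hC : M.IsCircuit C := hC
  obtain ⟨c, hc⟩ := hC.nonempty
  have hspan : φ c ∈ span (ZMod 2) (φ '' (C \ {c})) := by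
    have hdep : ¬ LinearIndepOn (ZMod 2) φ (insert c (C \ {c})) := by
      rw [insert_sdiff_singleton, insert_eq_of_mem hc]
      exact fun h => hC.not_indep ((hM C).2 ⟨hC.subset_ground, h⟩)
    rw [linearIndepOn_insert (notMem_sdiff_of_mem (mem_singleton c))] at hdep
    by_contra hcS
    exact hdep ⟨hM.linearIndepOn (hC.sdiff_singleton_indep hc), hcS⟩
  obtain ⟨S, hSC, hS⟩ := mem_span_image_iff_exists_finset_sum.1 hspan
  have hcS : c ∉ S := fun h => (hSC h).2 rfl
  have hsum : ∑ x ∈ insert c S, φ x = 0 := by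
    rw [Finset.sum_insert hcS, hS, ← two_smul (ZMod 2), show (2 : ZMod 2) = 0 from rfl, zero_smul]
  refine ⟨insert c S, hC.eq_of_not_indep_subset ?_ ?_, hsum⟩
  · exact hM.not_indep_of_sum_eq_zero (Finset.insert_nonempty c S) hsum
  · rw [Finset.coe_insert]
    exact insert_subset hc (hSC.trans sdiff_subset)

theorem IsRep.exists_mcircuit_subset_sum_ne_zero (hM : IsRep M φ) (f : α → ZMod 2) (S : Finset α)
    (hSE : ↑S ⊆ M.E) (hφ : ∑ x ∈ S, φ x = 0) (hf : ∑ x ∈ S, f x ≠ 0) :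
    ∃ C : Finset α, MCircuit M ↑C ∧ C ⊆ S ∧ ∑ x ∈ C, f x ≠ 0 := by
  classical
  induction S using Finset.strongInduction with
  | H S ih =>
  have hS : S.Nonempty := Finset.nonempty_of_sum_ne_zero hf
  have hSdep : M.Dep ↑S := (M.not_indep_iff hSE).1 (hM.not_indep_of_sum_eq_zero hS hφ)
  obtain ⟨C', hC'S, hC'⟩ := hSdep.exists_isCircuit_subset
  obtain ⟨C, rfl, hCφ⟩ := hM.exists_finset_sum_eq_zero_of_mcircuit hC'
  have hCS : C ⊆ S := Finset.coe_subset.1 hC'S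
  by_cases hCf : ∑ x ∈ C, f x = 0
  · obtain ⟨D, hD, hDS, hDf⟩ :=
      ih (S \ C) (Finset.sdiff_ssubset hCS (Finset.coe_nonempty.1 hC'.nonempty))
      ((Finset.coe_subset.2 Finset.sdiff_subset).trans hSE)
      (by rw [Finset.sum_sdiff_eq_sub hCS, hφ, hCφ, sub_zero])
      (by rwa [Finset.sum_sdiff_eq_sub hCS, hCf, sub_zero])
    exact ⟨D, hD, hDS.trans Finset.sdiff_subset, hDf⟩
  · exact ⟨C, hC', hCS, hCf⟩

end Representation

def ContainsOddCircuit (M : Matroid α) (T X : Set α) : Prop :=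
  ∃ C, MCircuit M C ∧ C ⊆ X ∧ Odd ((C ∩ T).ncard)

section ElementSplitting

variable {W : Type*} [AddCommGroup W] [Module (ZMod 2) W] {M N : Matroid α} {φ : α → W}
  {T X : Set α} {a : α}

open scoped Classical in
theorem splitRep_of_ne {x : α} (hx : x ≠ a) :
    splitRep φ T a x = (φ x, if x ∈ T then 1 else 0) :=
  if_neg hx

theorem splitRep_self : splitRep φ T a a = (0, 1) :=
  if_pos rfl

open scoped Classical in
theorem sum_splitRep {S : Finset α} (haS : a ∉ S) :
    ∑ x ∈ S, splitRep φ T a x = (∑ x ∈ S, φ x, ∑ x ∈ S, if x ∈ T then 1 else 0) := by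
  rw [Finset.sum_congr rfl fun x hx => splitRep_of_ne (ne_of_mem_of_not_mem hx haS)]
  exact Prod.ext (Prod.fst_sum ..) (Prod.snd_sum ..)

theorem map_fst_span_splitRep (haX : a ∉ X) :
    (span (ZMod 2) (splitRep φ T a '' X)).map (LinearMap.fst (ZMod 2) W (ZMod 2)) =
      span (ZMod 2) (φ '' X) := by
  rw [map_span, image_image]
  refine congrArg _ (image_congr fun x hx => ?_)
  rw [splitRep_of_ne (ne_of_mem_of_not_mem hx haX)]
  rfl

theorem map_fst_span_splitRep_insert :
    (span (ZMod 2) (splitRep φ T a '' insert a X)).map (LinearMap.fst (ZMod 2) W (ZMod 2)) =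
      (span (ZMod 2) (splitRep φ T a '' X)).map (LinearMap.fst (ZMod 2) W (ZMod 2)) := by
  have h0 : (span (ZMod 2) {((0, 1) : W × ZMod 2)}).map (LinearMap.fst (ZMod 2) W (ZMod 2)) = ⊥ :=
    by
    rw [map_span, image_singleton, LinearMap.fst_apply, span_singleton_eq_bot.2 rfl]
  rw [image_insert_eq, span_insert, Submodule.map_sup, splitRep_self, h0, bot_sup_eq]

theorem IsRep.mem_span_splitRep_iff (hM : IsRep M φ) (hXE : X ⊆ M.E) (haX : a ∉ X) :
    ((0, 1) : W × ZMod 2) ∈ span (ZMod 2) (splitRep φ T a '' X) ↔ ContainsOddCircuit M T X := by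
  classical
  rw [mem_span_image_iff_exists_finset_sum]
  constructor
  · rintro ⟨S, hSX, hS⟩
    rw [sum_splitRep fun h => haX (hSX h), Prod.mk.injEq] at hS
    obtain ⟨C, hC, hCS, hCT⟩ :=
      hM.exists_mcircuit_subset_sum_ne_zero _ S (hSX.trans hXE) hS.1 (hS.2 ▸ one_ne_zero)
    exact ⟨C, hC, (Finset.coe_subset.2 hCS).trans hSX, (sum_boole_ne_zero_iff_odd C T).1 hCT⟩
  · rintro ⟨C, hC, hCX, hodd⟩
    obtain ⟨S, rfl, hS⟩ := hM.exists_finset_sum_eq_zero_of_mcircuit hC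
    refine ⟨S, hCX, ?_⟩
    rw [sum_splitRep fun h => haX (hCX h), hS]
    exact Prod.ext rfl (ZMod.ne_zero_iff_eq_one.1 ((sum_boole_ne_zero_iff_odd S T).2 hodd))

theorem IsEleSplit.mrank_eq_finrank (hN : IsEleSplit M φ T a N) (hfin : M.E.Finite)
    (hX : X ⊆ insert a M.E) :
    mrank N X = finrank (ZMod 2) (span (ZMod 2) (splitRep φ T a '' X)) :=
  hN.2.2.mrank_eq_finrank (hN.2.1 ▸ hX) ((hfin.insert a).subset hX)

theorem IsEleSplit.mrank_insert (hM : IsRep M φ) (hN : IsEleSplit M φ T a N)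
    (hfin : M.E.Finite) (hXE : X ⊆ M.E) : mrank N (insert a X) = mrank M X + 1 := by
  have := FiniteDimensional.span_of_finite (ZMod 2)
    (((hfin.subset hXE).insert a).image (splitRep φ T a))
  have ha : ((0, 1) : W × ZMod 2) ∈ span (ZMod 2) (splitRep φ T a '' insert a X) :=
    subset_span ⟨a, mem_insert a X, splitRep_self⟩
  rw [hN.mrank_eq_finrank hfin (insert_subset_insert hXE),
    hM.mrank_eq_finrank hXE (hfin.subset hXE), ← finrank_map_fst_add_one _ ha,
    map_fst_span_splitRep_insert, map_fst_span_splitRep fun h => hN.1 (hXE h)]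

theorem IsEleSplit.mrank_of_containsOddCircuit (hM : IsRep M φ) (hN : IsEleSplit M φ T a N)
    (hfin : M.E.Finite) (hXE : X ⊆ M.E) (hX : ContainsOddCircuit M T X) :
    mrank N X = mrank M X + 1 := by
  have haX : a ∉ X := fun h => hN.1 (hXE h)
  have := FiniteDimensional.span_of_finite (ZMod 2) ((hfin.subset hXE).image (splitRep φ T a))
  rw [hN.mrank_eq_finrank hfin (hXE.trans (subset_insert a M.E)),
    hM.mrank_eq_finrank hXE (hfin.subset hXE),
    ← finrank_map_fst_add_one _ ((hM.mem_span_splitRep_iff hXE haX).2 hX),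
    map_fst_span_splitRep haX]

theorem IsEleSplit.mrank_of_not_containsOddCircuit (hM : IsRep M φ)
    (hN : IsEleSplit M φ T a N) (hfin : M.E.Finite) (hXE : X ⊆ M.E)
    (hX : ¬ ContainsOddCircuit M T X) : mrank N X = mrank M X := by
  have haX : a ∉ X := fun h => hN.1 (hXE h)
  have := FiniteDimensional.span_of_finite (ZMod 2) ((hfin.subset hXE).image (splitRep φ T a))
  rw [hN.mrank_eq_finrank hfin (hXE.trans (subset_insert a M.E)),
    hM.mrank_eq_finrank hXE (hfin.subset hXE),
    ← finrank_map_fst _ (mt (hM.mem_span_splitRep_iff hXE haX).1 hX),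
    map_fst_span_splitRep haX]

theorem IsEleSplit.mrank_le (hM : IsRep M φ) (hN : IsEleSplit M φ T a N) (hfin : M.E.Finite)
    (hXE : X ⊆ M.E) : mrank M X ≤ mrank N X := by
  by_cases hX : ContainsOddCircuit M T X
  · exact (hN.mrank_of_containsOddCircuit hM hfin hXE hX).symm ▸ Nat.le_succ _
  · exact (hN.mrank_of_not_containsOddCircuit hM hfin hXE hX).ge

end ElementSplitting

theorem IsKSeparation.symm {M : Matroid α} {k : ℕ} {A B : Set α} (h : IsKSeparation M k A B) :
    IsKSeparation M k B A :=
  let ⟨hAB, hdisj, hA, hB, hr⟩ := h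
  ⟨union_comm A B ▸ hAB, hdisj.symm, hB, hA, by omega⟩

section Connectivity

variable {W : Type*} [AddCommGroup W] [Module (ZMod 2) W] {M N : Matroid α} {φ : α → W}
  {T A B : Set α} {a : α} {n k : ℕ}

theorem IsEleSplit.mrank_ground (hM : IsRep M φ) (hN : IsEleSplit M φ T a N)
    (hfin : M.E.Finite) : mrank N N.E = mrank M M.E + 1 :=
  hN.2.1 ▸ hN.mrank_insert hM hfin subset_rfl

theorem IsEleSplit.isKSeparation_insert (hM : IsRep M φ) (hN : IsEleSplit M φ T a N)
    (hfin : M.E.Finite) (hA : A ⊆ M.E) (hcard : 2 * A.ncard < M.E.ncard)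
    (hno : ¬ ContainsOddCircuit M T (M.E \ A)) :
    IsKSeparation N (A.ncard + 1) (insert a A) (M.E \ A) := by
  have hAfin : A.Finite := hfin.subset hA
  refine ⟨by rw [insert_union, union_sdiff_cancel hA, hN.2.1],
    disjoint_insert_left.2 ⟨fun h => hN.1 h.1, disjoint_sdiff_right⟩,
    (ncard_insert_of_notMem (fun h => hN.1 (hA h)) hAfin).ge,
    by rw [ncard_sdiff hA hAfin]; omega, ?_⟩
  rw [hN.mrank_insert hM hfin hA, hN.mrank_of_not_containsOddCircuit hM hfin sdiff_subset hno,
    hN.mrank_ground hM hfin]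
  have : mrank M A ≤ A.ncard := mrank_le_ncard hAfin
  have : mrank M (M.E \ A) ≤ mrank M M.E := mrank_mono sdiff_subset hfin
  omega

theorem IsEleSplit.not_isKSeparation (hM : IsRep M φ) (hN : IsEleSplit M φ T a N)
    (hfin : M.E.Finite) (hcard : n - 2 ≤ M.E.ncard) (hconn : NConnected M n)
    (hcond : ∀ A ⊆ M.E, A.ncard = n - 2 → ContainsOddCircuit M T (M.E \ A))
    (hk : 1 ≤ k) (hkn : k < n) (haA : a ∈ A) : ¬ IsKSeparation N k A B := by
  rintro ⟨hAB, hdisj, hkA, hkB, hr⟩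
  set A₀ := A \ {a}
  have hA₀B : A₀ ∪ B = M.E := by
    rw [← sdiff_singleton_eq_self (disjoint_left.1 hdisj haA), ← union_sdiff_distrib, hAB,
      hN.2.1, insert_sdiff_self_of_notMem hN.1]
  have hA₀E : A₀ ⊆ M.E := hA₀B ▸ subset_union_left
  have hBE : B ⊆ M.E := hA₀B ▸ subset_union_right
  have hA₀card : A₀.ncard + 1 = A.ncard :=
    ncard_sdiff_singleton_add_one haA ((hfin.insert a).subset (hN.2.1 ▸ hAB ▸ subset_union_left))
  have hM_sep : ∀ j, 1 ≤ j → j < n → j ≤ A₀.ncard → j ≤ B.ncard →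
      mrank M A₀ + mrank M B + 1 ≤ mrank M M.E + j → False :=
    fun j h1 h2 hA hB hr => hconn j A₀ B h1 h2 ⟨hA₀B, hdisj.mono_left sdiff_subset, hA, hB, hr⟩
  rw [← insert_eq_of_mem haA, ← insert_sdiff_singleton, hN.mrank_insert hM hfin hA₀E,
    hN.mrank_ground hM hfin] at hr
  rcases (by omega : k + 1 ≤ A.ncard ∨ A.ncard = k) with hA | hA
  · exact hM_sep k hk hkn (by omega) hkB (by have := hN.mrank_le hM hfin hBE; omega)
  obtain ⟨A', hA₀A', hA'E, hA'card⟩ :=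
    exists_subsuperset_card_eq hA₀E (by omega : A₀.ncard ≤ n - 2) hcard
  have hB : ContainsOddCircuit M T B := by
    obtain ⟨C, hC, hCA', hodd⟩ := hcond A' hA'E hA'card
    refine ⟨C, hC, fun x hx => ?_, hodd⟩
    obtain ⟨hxE, hxA'⟩ := hCA' hx
    exact (hA₀B.symm ▸ hxE : x ∈ A₀ ∪ B).resolve_left fun h => hxA' (hA₀A' h)
  rw [hN.mrank_of_containsOddCircuit hM hfin hBE hB] at hr
  rcases (by omega : k = 1 ∨ 2 ≤ k) with rfl | hk2
  · have hA₀ : A₀ = ∅ := (ncard_eq_zero (hfin.subset hA₀E)).1 (by omega)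
    rw [hA₀, empty_union] at hA₀B
    rw [hA₀B] at hr
    omega
  · exact hM_sep (k - 1) (by omega) (by omega) (by omega) (by omega) (by omega)

end Connectivity

theorem eleSplit_nConnected_iff_circuit_cond_general {α W : Type*}
    [AddCommGroup W] [Module (ZMod 2) W]
    (n : ℕ) (hn : 2 ≤ n) (M N : Matroid α) (φ : α → W) (hM : IsRep M φ)
    (hfin : M.E.Finite) (hcard : 2 * n - 2 ≤ M.E.ncard) (hconn : NConnected M n)
    (T : Set α)
    (a : α) (hN : IsEleSplit M φ T a N) :
    NConnected N n ↔
      ∀ A ⊆ M.E, A.ncard = n - 2 →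
        ∃ C : Set α, MCircuit M C ∧ C ⊆ M.E \ A ∧ Odd ((C ∩ T).ncard) := by
  constructor
  · intro hNconn A hA hAcard
    by_contra hno
    exact hNconn (A.ncard + 1) _ _ (by omega) (by omega)
      (hN.isKSeparation_insert hM hfin hA (by omega) hno)
  · intro hcond k A B hk hkn hsep
    have ha : a ∈ A ∪ B := hsep.1 ▸ hN.2.1 ▸ mem_insert a M.E
    rcases ha with haA | haB
    · exact hN.not_isKSeparation hM hfin (by omega) hconn hcond hk hkn haA hsep
    · exact hN.not_isKSeparation hM hfin (by omega) hconn hcond hk hkn haB hsep.symm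

/-- M'_T is n-connected if and only if for every A ⊆ E(M) with |A| = n - 2 there is a
circuit C of M avoiding A and meeting T in an odd number of elements. -/
theorem eleSplit_nConnected_iff_circuit_cond {α W : Type*}
    [AddCommGroup W] [Module (ZMod 2) W]
    (n : ℕ) (hn : 2 ≤ n) (M N : Matroid α) (φ : α → W) (hM : IsRep M φ)
    (hfin : M.E.Finite) (hcard : 2 * n - 2 ≤ M.E.ncard) (hconn : NConnected M n)
    (T : Set α) (hT : T ⊆ M.E) (hTcard : T.ncard = n - 1)
    (a : α) (hN : IsEleSplit M φ T a N) :
    NConnected N n ↔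
      ∀ A ⊆ M.E, A.ncard = n - 2 →
        ∃ C : Set α, MCircuit M C ∧ C ⊆ M.E \ A ∧ Odd ((C ∩ T).ncard) :=
  eleSplit_nConnected_iff_circuit_cond_general n hn M N φ hM hfin hcard hconn T a hN
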